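/- Let ((D_t),(φ_{s,t})) be an evolution family of order d ∈ [1,+∞], and let (f_t) and (g_t) be two Loewner chains of order d over (D_t), both associated with (φ_{s,t}) (i.e. f_s = f_t∘φ_{s,t} and g_s = g_t∘φ_{s,t} for all 0 ≤ s ≤ t). Then there exists a biholomorphism F from ∪_{t≥0} g_t(D_t) onto ∪_{t≥0} f_t(D_t) such that f_t = F∘g_t for all t ≥ 0. -/

import Mathlib

open MeasureTheory Set Filter Metric
open scoped ENNReal NNReal Topology

noncomputable section

/-- The annulus `𝔸_r = {z : r < |z| < 1}`.  For `r = 0` this is the punctured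
unit disk `𝔻*`. -/
def stdAnnulus (r : ℝ) : Set ℂ := {z : ℂ | r < ‖z‖ ∧ ‖z‖ < 1}

/-- The exterior of the closed unit disk, `ℂ ∖ cl 𝔻`. -/
def extDisk : Set ℂ := {z : ℂ | 1 < ‖z‖}

/-- The punctured plane `ℂ* = ℂ ∖ {0}`. -/
def punctPlane : Set ℂ := {z : ℂ | z ≠ 0}

/-- `ω(r) = -π / log r` for `r ∈ (0,1)`, and `ω(0) = 0`. -/
def omegaFun (r : ℝ) : ℝ := if r = 0 then 0 else -Real.pi / Real.log r

/-- `f ∈ AC^d([0,∞))`: `f` is locally absolutely continuous on `[0,∞)` with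
(a.e.) derivative of class `L^d_loc`; the derivative is represented by a
function `g` via the fundamental theorem of calculus. -/
def ACd (d : ℝ≥0∞) (f : ℝ → ℝ) : Prop :=
  ∃ g : ℝ → ℝ,
    (∀ T : ℝ, 0 < T → MemLp g d (volume.restrict (Icc (0:ℝ) T))) ∧
    ∀ a b : ℝ, 0 ≤ a → a ≤ b → f b - f a = ∫ t in a..b, g t

/-- A (doubly connected) canonical domain system of order `d`: a family of
annuli `D_t = 𝔸_{r t}` such that `t ↦ ω(r t)` is non-increasing and of class
`AC^d` on `[0,∞)`. -/
structure CanonicalDomainSystem (d : ℝ≥0∞) where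
  r : ℝ → ℝ
  r_nonneg : ∀ t : ℝ, 0 ≤ t → 0 ≤ r t
  r_lt_one : ∀ t : ℝ, 0 ≤ t → r t < 1
  omega_anti : ∀ ⦃s t : ℝ⦄, 0 ≤ s → s ≤ t → omegaFun (r t) ≤ omegaFun (r s)
  omega_ACd : ACd d fun t => omegaFun (r t)

/-- A Loewner chain of order `d` over the canonical domain system `D`. -/
structure IsLoewnerChain (d : ℝ≥0∞) (D : CanonicalDomainSystem d) (f : ℝ → ℂ → ℂ) : Prop where
  holo : ∀ t : ℝ, 0 ≤ t → DifferentiableOn ℂ (f t) (stdAnnulus (D.r t))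
  inj : ∀ t : ℝ, 0 ≤ t → InjOn (f t) (stdAnnulus (D.r t))
  mono : ∀ ⦃s t : ℝ⦄, 0 ≤ s → s ≤ t →
    f s '' stdAnnulus (D.r s) ⊆ f t '' stdAnnulus (D.r t)
  lc3 : ∀ S T : ℝ, 0 ≤ S → S ≤ T → ∀ K : Set ℂ, IsCompact K → K ⊆ stdAnnulus (D.r S) →
    ∃ k : ℝ → ℝ, (∀ x, 0 ≤ k x) ∧ MemLp k d (volume.restrict (Icc S T)) ∧
      ∀ z ∈ K, ∀ s t : ℝ, S ≤ s → s ≤ t → t ≤ T →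
        ‖f s z - f t z‖ ≤ ∫ ξ in s..t, k ξ

/-- An evolution family of order `d` over the canonical domain system `D`. -/
structure IsEvolutionFamily (d : ℝ≥0∞) (D : CanonicalDomainSystem d)
    (φ : ℝ → ℝ → ℂ → ℂ) : Prop where
  holo : ∀ ⦃s t : ℝ⦄, 0 ≤ s → s ≤ t → DifferentiableOn ℂ (φ s t) (stdAnnulus (D.r s))
  mapsTo : ∀ ⦃s t : ℝ⦄, 0 ≤ s → s ≤ t →
    MapsTo (φ s t) (stdAnnulus (D.r s)) (stdAnnulus (D.r t))
  ef1 : ∀ s : ℝ, 0 ≤ s → ∀ z ∈ stdAnnulus (D.r s), φ s s z = z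
  ef2 : ∀ ⦃s u t : ℝ⦄, 0 ≤ s → s ≤ u → u ≤ t → ∀ z ∈ stdAnnulus (D.r s),
    φ s t z = φ u t (φ s u z)
  ef3 : ∀ S T : ℝ, 0 ≤ S → S ≤ T → ∀ z ∈ stdAnnulus (D.r S),
    ∃ k : ℝ → ℝ, (∀ x, 0 ≤ k x) ∧ MemLp k d (volume.restrict (Icc S T)) ∧
      ∀ s u t : ℝ, S ≤ s → s ≤ u → u ≤ t → t ≤ T →
        ‖φ s u z - φ s t z‖ ≤ ∫ ξ in u..t, k ξ

/-- The domain `𝒟 = {(z,t) : t ≥ 0, z ∈ D_t}` of a weak holomorphic vector field. -/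
def vfDomain {d : ℝ≥0∞} (D : CanonicalDomainSystem d) : Set (ℂ × ℝ) :=
  {p : ℂ × ℝ | 0 ≤ p.2 ∧ p.1 ∈ stdAnnulus (D.r p.2)}

/-- A weak holomorphic vector field of order `d` over `D` (we regard `G` as a
function of `(z, t)` written `G z t`). -/
structure IsWeakHolVF (d : ℝ≥0∞) (D : CanonicalDomainSystem d) (G : ℂ → ℝ → ℂ) : Prop where
  meas : ∀ z : ℂ, Measurable fun t : {t : ℝ // 0 ≤ t ∧ z ∈ stdAnnulus (D.r t)} => G z t.1
  holo : ∀ t : ℝ, 0 ≤ t → DifferentiableOn ℂ (fun z => G z t) (stdAnnulus (D.r t))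
  bound : ∀ K : Set (ℂ × ℝ), IsCompact K → K ⊆ vfDomain D →
    ∃ k : ℝ → ℝ, (∀ x, 0 ≤ k x) ∧ MemLp k d (volume.restrict (Prod.snd '' K)) ∧
      ∀ p ∈ K, ‖G p.1 p.2‖ ≤ k p.2

/-- `G` is semicomplete: for every initial condition the Carathéodory initial
value problem (in integral form) has a solution defined on all of `[s,∞)`. -/
def IsSemicomplete {d : ℝ≥0∞} (D : CanonicalDomainSystem d) (G : ℂ → ℝ → ℂ) : Prop :=
  ∀ s : ℝ, 0 ≤ s → ∀ z ∈ stdAnnulus (D.r s),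
    ∃ w : ℝ → ℂ, w s = z ∧ (∀ t : ℝ, s ≤ t → w t ∈ stdAnnulus (D.r t)) ∧
      ∀ t : ℝ, s ≤ t → w t = z + ∫ ξ in s..t, G (w ξ) ξ

/-- `γ` is a closed curve (parametrized by `[0,1]`) contained in `A`. -/
def IsClosedCurveIn (γ : ℝ → ℂ) (A : Set ℂ) : Prop :=
  ContinuousOn γ (Icc 0 1) ∧ γ 0 = γ 1 ∧ ∀ t ∈ Icc (0:ℝ) 1, γ t ∈ A

/-- The closed curve `γ` has index (winding number) `n` about the point `w`,
expressed via a continuous logarithm of `γ - w`. -/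
def HasWindingNumber (γ : ℝ → ℂ) (w : ℂ) (n : ℤ) : Prop :=
  ∃ g : ℝ → ℂ, ContinuousOn g (Icc 0 1) ∧
    (∀ t ∈ Icc (0:ℝ) 1, γ t - w = Complex.exp (g t)) ∧
    g 1 - g 0 = 2 * Real.pi * Complex.I * n

/-- `I(f ∘ γ) = I(γ)` for every closed curve `γ` in `A`: `f` preserves the
index about the origin of closed curves in `A`. -/
def PreservesWinding (f : ℂ → ℂ) (A : Set ℂ) : Prop :=
  ∀ γ : ℝ → ℂ, IsClosedCurveIn γ A → ∀ n : ℤ,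
    (HasWindingNumber γ 0 n ↔ HasWindingNumber (fun t => f (γ t)) 0 n)

/-- The Loewner chain `f` is associated with the evolution family `φ`:
`f_s = f_t ∘ φ_{s,t}`. -/
def AssociatedLC {d : ℝ≥0∞} (D : CanonicalDomainSystem d) (f : ℝ → ℂ → ℂ)
    (φ : ℝ → ℝ → ℂ → ℂ) : Prop :=
  ∀ s t : ℝ, 0 ≤ s → s ≤ t → ∀ z ∈ stdAnnulus (D.r s), f s z = f t (φ s t z)

/-- The union `⋃_{t ≥ 0} f_t(D_t)` of the ranges of a Loewner chain. -/
def chainUnion {d : ℝ≥0∞} (D : CanonicalDomainSystem d) (f : ℝ → ℂ → ℂ) : Set ℂ :=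
  ⋃ t ∈ Ici (0:ℝ), f t '' stdAnnulus (D.r t)

/-- The evolution family `φ` has Loewner range `Ω`, i.e. there is an associated
Loewner chain, preserving winding numbers, whose union of ranges is `Ω`.
(Taking `Ω = 𝔸_ρ`, `𝔻*`, `ℂ ∖ cl 𝔻`, `ℂ*`, this defines the conformal types
I, II, III, IV respectively.) -/
def HasConformalType {d : ℝ≥0∞} (D : CanonicalDomainSystem d) (φ : ℝ → ℝ → ℂ → ℂ)
    (Ω : Set ℂ) : Prop :=
  ∃ f : ℝ → ℂ → ℂ, IsLoewnerChain d D f ∧ AssociatedLC D f φ ∧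
    (∀ t : ℝ, 0 ≤ t → PreservesWinding (f t) (stdAnnulus (D.r t))) ∧
    chainUnion D f = Ω

/-- `φ s t → 0` as `t → +∞`, uniformly on compact subsets of `D_s`. -/
def ConvergesToZeroOnCompacta {d : ℝ≥0∞} (D : CanonicalDomainSystem d)
    (φ : ℝ → ℝ → ℂ → ℂ) (s : ℝ) : Prop :=
  ∀ K : Set ℂ, IsCompact K → K ⊆ stdAnnulus (D.r s) →
    TendstoUniformlyOn (fun t z => φ s t z) (fun _ => 0) atTop K

/-- `N(f)`: the free term of the Laurent expansion of `f`, holomorphic on the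
annulus `𝔸_r`, computed as a mean value over the circle of radius `(1+r)/2`. -/
def freeTerm (r : ℝ) (f : ℂ → ℂ) : ℂ :=
  (2 * Real.pi : ℂ)⁻¹ *
    ∫ θ in (0:ℝ)..(2 * Real.pi), f ((((1 + r) / 2 : ℝ) : ℂ) * Complex.exp (θ * Complex.I))

/-- The Villat kernel `K_r`. -/
def villatKernel (r : ℝ) (z : ℂ) : ℂ :=
  (1 + z) / (1 - z) +
    ∑' ν : ℕ,
      ((1 + (r : ℂ) ^ (2 * (ν + 1)) * z) / (1 - (r : ℂ) ^ (2 * (ν + 1)) * z) +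
        (1 + z / (r : ℂ) ^ (2 * (ν + 1))) / (1 - z / (r : ℂ) ^ (2 * (ν + 1))))

/-- The class `V_r`: for `r ∈ (0,1)`, holomorphic functions on `𝔸_r` given by
the Villat-kernel representation with a pair of positive Borel measures on the
unit circle of total mass one; for `r = 0`, the (normalized) Carathéodory class
on the unit disk. -/
def MemClassV (r : ℝ) (p : ℂ → ℂ) : Prop :=
  (r = 0 →
    DifferentiableOn ℂ p (ball (0:ℂ) 1) ∧ p 0 = 1 ∧ ∀ z ∈ ball (0:ℂ) 1, 0 < (p z).re) ∧
  (r ≠ 0 →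
    DifferentiableOn ℂ p (stdAnnulus r) ∧
    ∃ μ₁ μ₂ : Measure ℂ,
      μ₁ {ξ : ℂ | ‖ξ‖ ≠ 1} = 0 ∧ μ₂ {ξ : ℂ | ‖ξ‖ ≠ 1} = 0 ∧
      μ₁ univ + μ₂ univ = 1 ∧
      ∀ z ∈ stdAnnulus r,
        p z = (∫ ξ, villatKernel r (z / ξ) ∂μ₁) +
          ∫ ξ, (1 - villatKernel r ((r : ℂ) * ξ / z)) ∂μ₂)

/-!
Since both chains are associated with `φ`, `g t₁ z₁ = g t₂ z₂` with `t₁ ≤ t₂` forces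
`z₂ = φ t₁ t₂ z₁` (injectivity of `g t₂`), hence `f t₁ z₁ = f t₂ z₂`. So `F (g t z) := f t z` is a
well-defined map between the Loewner ranges, and it is bijective by the same argument with `f` and
`g` exchanged. Locally `F = f t ∘ (g t)⁻¹`, which is holomorphic where `(g t)' ≠ 0` by the inverse
function theorem; the critical points of the injective map `g t` are isolated and `F` is continuous
there because `g t` is open, so they are removable singularities.
-/

lemma Set.InjOn.not_eventually_eq {X Y : Type*} [TopologicalSpace X] {U : Set X} {g : X → Y}
    {x : X} [(𝓝[≠] x).NeBot] (hg : InjOn g U) (hU : U ∈ 𝓝 x) :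
    ¬ ∀ᶠ y in 𝓝 x, g y = g x := by
  intro h
  have hx : ∀ᶠ y in 𝓝 x, y = x :=
    (h.and hU).mono fun y hy => hg hy.2 (mem_of_mem_nhds hU) hy.1
  obtain ⟨y, hyx, hne⟩ := ((hx.filter_mono nhdsWithin_le_nhds).and
    (self_mem_nhdsWithin : ∀ᶠ y in 𝓝[≠] x, y ∈ ({x}ᶜ : Set X))).exists
  exact hne hyx

lemma ContinuousAt.of_comp_eventuallyEq {X Y Z : Type*} [TopologicalSpace X]
    [TopologicalSpace Y] [TopologicalSpace Z] {g : X → Y} {f : X → Z} {F : Y → Z} {x : X}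
    (hg : 𝓝 (g x) ≤ map g (𝓝 x)) (hf : ContinuousAt f x) (hFg : F ∘ g =ᶠ[𝓝 x] f) :
    ContinuousAt F (g x) := by
  have hFgx : F (g x) = f x := hFg.eq_of_nhds
  calc map F (𝓝 (g x)) ≤ map F (map g (𝓝 x)) := map_mono hg
    _ = map f (𝓝 x) := by rw [map_map, map_congr hFg]
    _ ≤ 𝓝 (F (g x)) := hFgx ▸ hf

lemma DifferentiableAt.of_comp_eventuallyEq_of_hasStrictDerivAt {𝕜 E : Type*}
    [NontriviallyNormedField 𝕜] [CompleteSpace 𝕜] [NormedAddCommGroup E] [NormedSpace 𝕜 E]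
    {g : 𝕜 → 𝕜} {g' x : 𝕜} {f F : 𝕜 → E} (hg : HasStrictDerivAt g g' x) (hg' : g' ≠ 0)
    (hf : DifferentiableAt 𝕜 f x) (hFg : F ∘ g =ᶠ[𝓝 x] f) :
    DifferentiableAt 𝕜 F (g x) := by
  set L := hg.localInverse g g' x hg'
  have hL : L (g x) = x := (hg.hasStrictFDerivAt_equiv hg').localInverse_apply_image
  have hLd : HasStrictDerivAt L g'⁻¹ (g x) := hg.to_localInverse hg'
  have hFL : F =ᶠ[𝓝 (g x)] f ∘ L := by
    have hLg : Tendsto L (𝓝 (g x)) (𝓝 x) := by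
      simpa only [hL] using hLd.hasDerivAt.continuousAt.tendsto
    filter_upwards [hg.eventually_right_inverse hg', hLg.eventually hFg] with y hy hFy
    rw [Function.comp_apply, ← hFy, Function.comp_apply, hy]
  refine hFL.differentiableAt_iff.mpr (DifferentiableAt.comp _ ?_ hLd.hasDerivAt.differentiableAt)
  rwa [hL]

section InjectiveHolomorphic

variable {U : Set ℂ} {g : ℂ → ℂ} {z : ℂ}

lemma AnalyticAt.nhds_le_map_nhds_of_injOn (hg : AnalyticAt ℂ g z) (hinj : InjOn g U)
    (hU : U ∈ 𝓝 z) : 𝓝 (g z) ≤ map g (𝓝 z) :=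
  hg.eventually_constant_or_nhds_le_map_nhds.resolve_left (hinj.not_eventually_eq hU)

lemma AnalyticAt.eventually_deriv_ne_zero_of_injOn (hg : AnalyticAt ℂ g z) (hinj : InjOn g U)
    (hU : U ∈ 𝓝 z) : ∀ᶠ w in 𝓝[≠] z, deriv g w ≠ 0 := by
  refine hg.deriv.eventually_eq_zero_or_eventually_ne_zero.resolve_left fun h => ?_
  have horder : analyticOrderAt (g · - g z) z = ⊤ := by
    rw [← hg.analyticOrderAt_deriv_add_one, analyticOrderAt_eq_top.mpr h, top_add]
  exact hinj.not_eventually_eq hU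
    ((analyticOrderAt_eq_top.mp horder).mono fun w hw => sub_eq_zero.mp hw)

lemma DifferentiableAt.of_comp_eqOn_of_injOn {f F : ℂ → ℂ} (hU : IsOpen U)
    (hg : DifferentiableOn ℂ g U) (hinj : InjOn g U) (hf : DifferentiableOn ℂ f U)
    (hFg : EqOn (F ∘ g) f U) (hz : z ∈ U) : DifferentiableAt ℂ F (g z) := by
  have hgan : AnalyticOnNhd ℂ g U := hg.analyticOnNhd hU
  have hregular : ∀ w ∈ U, deriv g w ≠ 0 → DifferentiableAt ℂ F (g w) := fun w hw hw' =>
    .of_comp_eventuallyEq_of_hasStrictDerivAt (hgan w hw).hasStrictDerivAt hw'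
      (hf.differentiableAt (hU.mem_nhds hw)) (eventuallyEq_of_mem (hU.mem_nhds hw) hFg)
  have hmap := (hgan z hz).nhds_le_map_nhds_of_injOn hinj (hU.mem_nhds hz)
  have hS : ∀ᶠ w in 𝓝 z, w ∈ U ∧ (w ≠ z → deriv g w ≠ 0) :=
    (hU.eventually_mem hz).and (eventually_nhdsWithin_iff.mp
      ((hgan z hz).eventually_deriv_ne_zero_of_injOn hinj (hU.mem_nhds hz)))
  refine (Complex.analyticAt_of_differentiable_on_punctured_nhds_of_continuousAt ?_
    (.of_comp_eventuallyEq hmap (hf.differentiableAt (hU.mem_nhds hz)).continuousAt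
      (eventuallyEq_of_mem (hU.mem_nhds hz) hFg))).differentiableAt
  rw [eventually_nhdsWithin_iff]
  filter_upwards [hmap (image_mem_map hS)] with y ⟨w, ⟨hwU, hw⟩, hwy⟩ hne
  subst hwy
  exact hregular w hwU (hw fun hwz => hne (hwz ▸ rfl))

end InjectiveHolomorphic

lemma isOpen_stdAnnulus (r : ℝ) : IsOpen (stdAnnulus r) :=
  (isOpen_lt continuous_const continuous_norm).inter (isOpen_lt continuous_norm continuous_const)

lemma mem_chainUnion {d : ℝ≥0∞} {D : CanonicalDomainSystem d} {g : ℝ → ℂ → ℂ} {w : ℂ} :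
    w ∈ chainUnion D g ↔ ∃ t, 0 ≤ t ∧ ∃ z ∈ stdAnnulus (D.r t), g t z = w := by
  simp [chainUnion]

/-- `g t z ↦ f t z` on `chainUnion D g`, for an arbitrarily chosen preimage `(z, t)`. -/
def chainTransfer {d : ℝ≥0∞} (D : CanonicalDomainSystem d) (g f : ℝ → ℂ → ℂ) (w : ℂ) : ℂ :=
  let p := Function.invFunOn (fun p : ℂ × ℝ => g p.2 p.1) (vfDomain D) w
  f p.2 p.1

section AssociatedChains

variable {d : ℝ≥0∞} {D : CanonicalDomainSystem d} {φ : ℝ → ℝ → ℂ → ℂ} {f g : ℝ → ℂ → ℂ}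
  {t₁ t₂ : ℝ} {z₁ z₂ : ℂ}

lemma AssociatedLC.apply_eq_of_apply_eq (hφ : IsEvolutionFamily d D φ)
    (hginj : ∀ t, 0 ≤ t → InjOn (g t) (stdAnnulus (D.r t)))
    (hfa : AssociatedLC D f φ) (hga : AssociatedLC D g φ) (ht₁ : 0 ≤ t₁) (ht₂ : 0 ≤ t₂)
    (hz₁ : z₁ ∈ stdAnnulus (D.r t₁)) (hz₂ : z₂ ∈ stdAnnulus (D.r t₂))
    (heq : g t₁ z₁ = g t₂ z₂) : f t₁ z₁ = f t₂ z₂ := by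
  wlog h : t₁ ≤ t₂ generalizing t₁ t₂ z₁ z₂
  · exact (this ht₂ ht₁ hz₂ hz₁ heq.symm (le_of_not_ge h)).symm
  have hz : z₂ = φ t₁ t₂ z₁ :=
    hginj t₂ ht₂ hz₂ (hφ.mapsTo ht₁ h hz₁) (heq ▸ hga t₁ t₂ ht₁ h z₁ hz₁)
  rw [hz, hfa t₁ t₂ ht₁ h z₁ hz₁]

lemma chainTransfer_apply (hφ : IsEvolutionFamily d D φ)
    (hginj : ∀ t, 0 ≤ t → InjOn (g t) (stdAnnulus (D.r t)))
    (hfa : AssociatedLC D f φ) (hga : AssociatedLC D g φ) {t : ℝ} {z : ℂ} (ht : 0 ≤ t)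
    (hz : z ∈ stdAnnulus (D.r t)) : chainTransfer D g f (g t z) = f t z := by
  have hex : ∃ p ∈ vfDomain D, g p.2 p.1 = g t z := ⟨(z, t), ⟨ht, hz⟩, rfl⟩
  obtain ⟨⟨hpt, hpz⟩, hp⟩ := Function.invFunOn_pos hex
  exact hfa.apply_eq_of_apply_eq hφ hginj hga hpt ht hpz hz hp

lemma bijOn_chainTransfer (hφ : IsEvolutionFamily d D φ)
    (hfinj : ∀ t, 0 ≤ t → InjOn (f t) (stdAnnulus (D.r t)))
    (hginj : ∀ t, 0 ≤ t → InjOn (g t) (stdAnnulus (D.r t)))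
    (hfa : AssociatedLC D f φ) (hga : AssociatedLC D g φ) :
    BijOn (chainTransfer D g f) (chainUnion D g) (chainUnion D f) := by
  have hF {t z} (ht : 0 ≤ t) (hz : z ∈ stdAnnulus (D.r t)) :
      chainTransfer D g f (g t z) = f t z :=
    chainTransfer_apply hφ hginj hfa hga ht hz
  refine ⟨fun w hw => ?_, fun w₁ hw₁ w₂ hw₂ hw => ?_, fun w hw => ?_⟩
  · obtain ⟨t, ht, z, hz, rfl⟩ := mem_chainUnion.mp hw
    exact mem_chainUnion.mpr ⟨t, ht, z, hz, (hF ht hz).symm⟩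
  · obtain ⟨t₁, ht₁, z₁, hz₁, rfl⟩ := mem_chainUnion.mp hw₁
    obtain ⟨t₂, ht₂, z₂, hz₂, rfl⟩ := mem_chainUnion.mp hw₂
    rw [hF ht₁ hz₁, hF ht₂ hz₂] at hw
    exact hga.apply_eq_of_apply_eq hφ hfinj hfa ht₁ ht₂ hz₁ hz₂ hw
  · obtain ⟨t, ht, z, hz, rfl⟩ := mem_chainUnion.mp hw
    exact ⟨g t z, mem_chainUnion.mpr ⟨t, ht, z, hz, rfl⟩, hF ht hz⟩

lemma differentiableOn_chainTransfer (hφ : IsEvolutionFamily d D φ) (hf : IsLoewnerChain d D f)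
    (hg : IsLoewnerChain d D g) (hfa : AssociatedLC D f φ) (hga : AssociatedLC D g φ) :
    DifferentiableOn ℂ (chainTransfer D g f) (chainUnion D g) := by
  intro w hw
  obtain ⟨t, ht, z, hz, rfl⟩ := mem_chainUnion.mp hw
  exact (DifferentiableAt.of_comp_eqOn_of_injOn (F := chainTransfer D g f) (isOpen_stdAnnulus _)
    (hg.holo t ht) (hg.inj t ht) (hf.holo t ht)
    (fun z hz => chainTransfer_apply hφ hg.inj hfa hga ht hz) hz).differentiableWithinAt

end AssociatedChains

theorem loewnerChain_uniqueness_general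
    (d : ℝ≥0∞) (D : CanonicalDomainSystem d) (φ : ℝ → ℝ → ℂ → ℂ)
    (hφ : IsEvolutionFamily d D φ) (f g : ℝ → ℂ → ℂ)
    (hf : IsLoewnerChain d D f) (hg : IsLoewnerChain d D g)
    (hfa : AssociatedLC D f φ) (hga : AssociatedLC D g φ) :
    ∃ F : ℂ → ℂ, DifferentiableOn ℂ F (chainUnion D g) ∧
      BijOn F (chainUnion D g) (chainUnion D f) ∧
      ∀ t : ℝ, 0 ≤ t → ∀ z ∈ stdAnnulus (D.r t), f t z = F (g t z) :=
  ⟨chainTransfer D g f, differentiableOn_chainTransfer hφ hf hg hfa hga,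
    bijOn_chainTransfer hφ hf.inj hg.inj hfa hga,
    fun _ ht _ hz => (chainTransfer_apply hφ hg.inj hfa hga ht hz).symm⟩

/-- Theorem 1.8 (uniqueness part): two Loewner chains associated with the same
evolution family differ by a biholomorphism of their Loewner ranges. -/
theorem loewnerChain_uniqueness
    (d : ℝ≥0∞) (hd : 1 ≤ d) (D : CanonicalDomainSystem d) (φ : ℝ → ℝ → ℂ → ℂ)
    (hφ : IsEvolutionFamily d D φ) (f g : ℝ → ℂ → ℂ)
    (hf : IsLoewnerChain d D f) (hg : IsLoewnerChain d D g)
    (hfa : AssociatedLC D f φ) (hga : AssociatedLC D g φ) :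
    ∃ F : ℂ → ℂ, DifferentiableOn ℂ F (chainUnion D g) ∧
      BijOn F (chainUnion D g) (chainUnion D f) ∧
      ∀ t : ℝ, 0 ≤ t → ∀ z ∈ stdAnnulus (D.r t), f t z = F (g t z) :=
  loewnerChain_uniqueness_general d D φ hφ f g hf hg hfa hga
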